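/- arXiv:1706.05803 — 3 statements merged into one kernel-verified Lean document; each statement's English description precedes it below -/
import Mathlib

section
/- Let Φ be an even Schwartz function on ℝ satisfying the Tauberian condition |Φ(λ)| > 0 on {ε/2 < |λ| < 2ε} for some ε > 0. Then there exist even Schwartz functions Ψ, Υ, Θ on ℝ such that supp Υ ⊂ {|λ| ≤ 2ε}, supp Θ ⊂ {ε/2 ≤ |λ| ≤ 2ε}, and Ψ(λ)Υ(λ) + Σ_{k=1}^∞ Φ(2^{-k}λ) Θ(2^{-k}λ) = 1 for all λ ∈ ℝ. -/
/-!
Take a smooth even cutoff `χ` equal to `1` on `|λ| ≤ 5ε/4` and vanishing for `|λ| ≥ 7ε/4`, and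
put `Ψ = Υ = χ`. With `ρ = χ²`, the function `η(λ) = ρ(λ) - ρ(2λ)` is supported in
`5ε/8 ≤ |λ| ≤ 7ε/4`, where `Φ` does not vanish, so `Θ = η / Φ` is a Schwartz function. Then
`Φ(2⁻ᵏλ)Θ(2⁻ᵏλ) = ρ(2⁻ᵏλ) - ρ(2⁻ᵏ⁺¹λ)`, and the series telescopes to `1 - ρ(λ)` because
`ρ(2⁻ᵏλ) = 1` for all large `k`.
-/

open Filter Function Topology
open scoped ContDiff SchwartzMap

theorem tsum_sub_eq_of_eventually_eq {G : Type*} [AddCommGroup G] [TopologicalSpace G]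
    {g : ℕ → G} {c : G} (hg : ∀ᶠ k in atTop, g k = c) :
    ∑' k, (g (k + 1) - g k) = c - g 0 := by
  obtain ⟨N, hN⟩ := eventually_atTop.1 hg
  have hvanish : ∀ k ∉ Finset.range N, g (k + 1) - g k = 0 := fun k hk => by
    rw [Finset.mem_range, not_lt] at hk
    rw [hN k hk, hN (k + 1) (by omega), sub_self]
  rw [tsum_eq_sum hvanish, Finset.sum_range_sub, hN N le_rfl]

theorem tendsto_two_zpow_neg_mul_atTop (l : ℝ) :
    Tendsto (fun k : ℕ => (2 : ℝ) ^ (-(k : ℤ)) * l) atTop (𝓝 0) := by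
  have h := (tendsto_pow_atTop_nhds_zero_of_lt_one (r := (2 : ℝ)⁻¹) (by norm_num)
    (by norm_num)).mul_const l
  simpa only [zero_mul, zpow_neg, zpow_natCast, inv_pow] using h

def dyadicDiff (ρ : ℝ → ℝ) (x : ℝ) : ℝ := ρ x - ρ (2 * x)

theorem tsum_dyadicDiff_eq {ρ : ℝ → ℝ} (hρ : ρ =ᶠ[𝓝 0] 1) (l : ℝ) :
    ∑' k : ℕ, dyadicDiff ρ ((2 : ℝ) ^ (-((k : ℤ) + 1)) * l) = 1 - ρ l := by
  have hdilate (k : ℕ) : 2 * ((2 : ℝ) ^ (-((k : ℤ) + 1)) * l) = (2 : ℝ) ^ (-(k : ℤ)) * l := by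
    rw [← mul_assoc, ← zpow_one_add₀ two_ne_zero]
    ring_nf
  have h := tsum_sub_eq_of_eventually_eq (g := fun k : ℕ => ρ ((2 : ℝ) ^ (-(k : ℤ)) * l))
    ((tendsto_two_zpow_neg_mul_atTop l).eventually (p := fun x => ρ x = 1) hρ)
  simpa only [dyadicDiff, hdilate, Nat.cast_add, Nat.cast_one, Nat.cast_zero, neg_zero, zpow_zero,
    one_mul] using h

theorem dyadicDiff_neg {ρ : ℝ → ℝ} (hρ : ∀ x, ρ (-x) = ρ x) (x : ℝ) :
    dyadicDiff ρ (-x) = dyadicDiff ρ x := by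
  simp only [dyadicDiff, mul_neg, hρ]

theorem ContDiff.dyadicDiff {n : WithTop ℕ∞} {ρ : ℝ → ℝ} (hρ : ContDiff ℝ n ρ) :
    ContDiff ℝ n (dyadicDiff ρ) :=
  hρ.sub (hρ.comp (contDiff_const.mul contDiff_id))

theorem tsupport_dyadicDiff_subset {ρ : ℝ → ℝ} {a b : ℝ}
    (h_one : ∀ x, |x| ≤ a → ρ x = 1) (h_zero : ∀ x, b ≤ |x| → ρ x = 0) :
    tsupport (dyadicDiff ρ) ⊆ {x | a / 2 ≤ |x| ∧ |x| ≤ b} := by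
  refine closure_minimal (fun x hx => ?_) ?_
  · have h2x : |2 * x| = 2 * |x| := by rw [abs_mul, abs_two]
    have hx0 := abs_nonneg x
    by_contra hout
    rcases not_and_or.1 hout with hsmall | hlarge
    · exact hx (by rw [dyadicDiff, h_one x (by linarith), h_one _ (by linarith), sub_self])
    · exact hx (by rw [dyadicDiff, h_zero x (by linarith), h_zero _ (by linarith), sub_self])
  · exact (isClosed_le continuous_const continuous_abs).inter
      (isClosed_le continuous_abs continuous_const)

theorem ContDiff.div_of_ne_zero_on_tsupport {𝕜 E : Type*} [NontriviallyNormedField 𝕜]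
    [NormedAddCommGroup E] [NormedSpace 𝕜 E] {n : WithTop ℕ∞} {f g : E → 𝕜}
    (hf : ContDiff 𝕜 n f) (hg : ContDiff 𝕜 n g) (hfg : ∀ x ∈ tsupport f, g x ≠ 0) :
    ContDiff 𝕜 n (f / g) := by
  refine contDiff_iff_contDiffAt.2 fun x => ?_
  by_cases hx : x ∈ tsupport f
  · exact hf.contDiffAt.div hg.contDiffAt (hfg x hx)
  · refine contDiffAt_const (c := (0 : 𝕜)).congr_of_eventuallyEq ?_
    filter_upwards [notMem_tsupport_iff_eventuallyEq.1 hx] with y hy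
    simp [hy]

theorem mul_div_apply_of_ne_zero_on_tsupport {X K : Type*} [TopologicalSpace X]
    [CommGroupWithZero K] {f g : X → K} (hfg : ∀ x ∈ tsupport f, g x ≠ 0) (x : X) :
    g x * (f / g) x = f x :=
  mul_div_cancel_of_imp' fun hgx => image_eq_zero_of_notMem_tsupport fun hx => hfg x hx hgx

theorem exists_schwartzMap_eq_div {E : Type*} [NormedAddCommGroup E] [NormedSpace ℝ E]
    {f g : E → ℝ} (hf : ContDiff ℝ ∞ f) (hf_cs : HasCompactSupport f) (hg : ContDiff ℝ ∞ g)
    (hfg : ∀ x ∈ tsupport f, g x ≠ 0) : ∃ Θ : 𝓢(E, ℝ), ⇑Θ = f / g :=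
  ⟨(div_eq_mul_inv f g ▸ hf_cs.mul_right).toSchwartzMap (hf.div_of_ne_zero_on_tsupport hg hfg),
    rfl⟩

/-- Calderón-type reproducing decomposition. Given an even Schwartz
function `Φ` satisfying the Tauberian condition on `{ε/2 < |λ| < 2ε}`, there are
even Schwartz functions `Ψ, Υ, Θ` with `supp Υ ⊆ {|λ| ≤ 2ε}`,
`supp Θ ⊆ {ε/2 ≤ |λ| ≤ 2ε}` and
`Ψ(λ)Υ(λ) + ∑_{k=1}^∞ Φ(2^{-k}λ)Θ(2^{-k}λ) = 1` for all `λ`. -/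
theorem stmt_5 (Φ : SchwartzMap ℝ ℝ) (hΦeven : ∀ x : ℝ, Φ (-x) = Φ x)
    (ε : ℝ) (hε : 0 < ε)
    (htaub : ∀ l : ℝ, ε / 2 < |l| → |l| < 2 * ε → Φ l ≠ 0) :
    ∃ Ψ Υ Θ : SchwartzMap ℝ ℝ,
      (∀ x : ℝ, Ψ (-x) = Ψ x) ∧ (∀ x : ℝ, Υ (-x) = Υ x) ∧ (∀ x : ℝ, Θ (-x) = Θ x) ∧
      (∀ l : ℝ, 2 * ε < |l| → Υ l = 0) ∧
      (∀ l : ℝ, |l| < ε / 2 ∨ 2 * ε < |l| → Θ l = 0) ∧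
      (∀ l : ℝ,
        Ψ l * Υ l
          + ∑' k : ℕ, Φ ((2 : ℝ) ^ (-((k : ℤ) + 1)) * l) * Θ ((2 : ℝ) ^ (-((k : ℤ) + 1)) * l)
        = 1) := by
  let χ : ContDiffBump (0 : ℝ) := ⟨5 * ε / 4, 7 * ε / 4, by positivity, by linarith⟩
  let ρ : ℝ → ℝ := χ * χ
  have hsupp : tsupport (dyadicDiff ρ) ⊆ {x | 5 * ε / 4 / 2 ≤ |x| ∧ |x| ≤ 7 * ε / 4} :=
    tsupport_dyadicDiff_subset
      (fun x hx => by simp [ρ, χ.one_of_mem_closedBall (x := x) (by simpa [Real.dist_eq] using hx)])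
      (fun x hx => by simp [ρ, χ.zero_of_le_dist (x := x) (by simpa [Real.dist_eq] using hx)])
  have hη_cs : HasCompactSupport (dyadicDiff ρ) :=
    (isCompact_closedBall 0 (7 * ε / 4)).of_isClosed_subset (isClosed_tsupport _)
      fun x hx => by simpa [Real.dist_eq] using (hsupp hx).2
  have hΦ : ∀ x ∈ tsupport (dyadicDiff ρ), Φ x ≠ 0 := fun x hx =>
    htaub x (by linarith [(hsupp hx).1]) (by linarith [(hsupp hx).2])
  obtain ⟨Θ, hΘ⟩ : ∃ Θ : 𝓢(ℝ, ℝ), ⇑Θ = dyadicDiff ρ / ⇑Φ :=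
    exists_schwartzMap_eq_div (χ.contDiff.mul χ.contDiff).dyadicDiff hη_cs (Φ.smooth ⊤) hΦ
  let Υ := χ.hasCompactSupport.toSchwartzMap χ.contDiff
  refine ⟨Υ, Υ, Θ, χ.neg, χ.neg, fun x => ?_, fun l hl => ?_, fun l hl => ?_, fun l => ?_⟩
  · have hρ_even (y : ℝ) : ρ (-y) = ρ y := by simp only [ρ, Pi.mul_apply, χ.neg]
    simp only [hΘ, Pi.div_apply, hΦeven, dyadicDiff_neg hρ_even]
  · exact χ.zero_of_le_dist (by rw [Real.dist_0_eq_abs]; show 7 * ε / 4 ≤ |l|; linarith)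
  · have hl_out : l ∉ tsupport (dyadicDiff ρ) := fun hl_in => by
      obtain ⟨hlow, hhigh⟩ := hsupp hl_in
      rcases hl with hl | hl <;> linarith
    rw [hΘ, Pi.div_apply, image_eq_zero_of_notMem_tsupport hl_out, zero_div]
  · have hρ_near_zero : ρ =ᶠ[𝓝 0] 1 := by
      simpa only [mul_one] using χ.eventuallyEq_one.mul χ.eventuallyEq_one
    simp only [hΘ, mul_div_apply_of_ne_zero_on_tsupport hΦ, tsum_dyadicDiff_eq hρ_near_zero]
    show χ l * χ l + (1 - χ l * χ l) = 1
    ring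
end

section
/- Let (X, ρ, μ) be a space of homogeneous type with μ(X) = ∞, and let L be a non-negative self-adjoint operator on L²(X, dμ) whose heat kernel p_t(x,y) satisfies the Gaussian upper bound |p_t(x,y)| ≤ C V(x,√t)^{-1} exp(−ρ(x,y)²/(ct)). Then the spectral measure of L assigns measure zero to the set {0}; that is, the spectral projection E({0}) = 0. -/
/-!
If `g = E({0}) f`, then `g = e^{-tL} g`, so Cauchy–Schwarz and the Gaussian bound give
`|g x|² ≤ ‖p_t(x, ·)‖₂² ‖g‖₂² ≲ ‖g‖₂² / V(x, √t)` with a constant independent of `t`: by doubling,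
the Gaussian integral `∫ exp (-2 ρ(x, y)² / (c t)) dμ(y)` is `≲ V(x, √t)`, as one sees by summing
over the annuli `k √t ≤ ρ(x, y) < (k + 1) √t`. As `t → ∞`, `V(x, √t) → μ(X) = ∞`, so `g x = 0`.
-/

open MeasureTheory Metric Real
open scoped ENNReal NNReal

lemma summable_rpow_mul_exp_neg_mul (n : ℝ) {a : ℝ} (ha : 0 < a) :
    Summable fun k : ℕ => ((k : ℝ) + 1) ^ n * exp (-a * k) := by
  have hshift : Summable fun k : ℕ => ((k + 1 : ℕ) : ℝ) ^ ⌈n⌉₊ * exp (-a * (k + 1 : ℕ)) :=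
    (summable_nat_add_iff 1).mpr (Real.summable_pow_mul_exp_neg_nat_mul ⌈n⌉₊ ha)
  refine (hshift.mul_left (exp a)).of_nonneg_of_le (fun k => by positivity) fun k => ?_
  have hpow : ((k : ℝ) + 1) ^ n ≤ ((k : ℝ) + 1) ^ ⌈n⌉₊ := by
    rw [← rpow_natCast]
    exact rpow_le_rpow_of_exponent_le (by linarith [k.cast_nonneg (α := ℝ)]) (Nat.le_ceil n)
  have hexp : exp (-a * k) = exp a * exp (-a * (k + 1 : ℕ)) := by
    rw [← exp_add]; push_cast; ring_nf
  rw [hexp, mul_left_comm]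
  push_cast
  gcongr

section Gaussian

variable {X : Type*} [PseudoMetricSpace X]

lemma ofReal_exp_neg_dist_sq_le_tsum_indicator {a s : ℝ} (ha : 0 ≤ a) (hs : 0 < s) (x y : X) :
    ENNReal.ofReal (exp (-a * dist x y ^ 2 / s ^ 2)) ≤
      ∑' k : ℕ, (ball x ((k + 1) * s)).indicator (fun _ => ENNReal.ofReal (exp (-a * k))) y := by
  set k := ⌊dist x y / s⌋₊
  have hk : (k : ℝ) ≤ dist x y / s := Nat.floor_le (by positivity)
  have hy : y ∈ ball x ((k + 1) * s) := by
    rw [mem_ball, dist_comm, ← div_lt_iff₀ hs]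
    exact Nat.lt_floor_add_one _
  refine le_trans ?_ (ENNReal.le_tsum k)
  rw [Set.indicator_of_mem hy]
  gcongr
  have hk_sq : (k : ℝ) ≤ (dist x y / s) ^ 2 := by
    rcases Nat.eq_zero_or_pos k with h | h
    · rw [h, Nat.cast_zero]; positivity
    · nlinarith [(Nat.one_le_cast (α := ℝ)).2 h]
  rw [neg_mul, neg_mul, neg_div, neg_le_neg_iff, mul_div_assoc, ← div_pow]
  exact mul_le_mul_of_nonneg_left hk_sq ha

variable [MeasurableSpace X] [OpensMeasurableSpace X] {μ : Measure X} {Cd n : ℝ}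

lemma exists_lintegral_exp_neg_dist_sq_le
    (hdoub : ∀ (x : X) (r lam : ℝ), 0 < r → 1 ≤ lam →
      μ (ball x (lam * r)) ≤ ENNReal.ofReal (Cd * lam ^ n) * μ (ball x r))
    {a : ℝ} (ha : 0 < a) :
    ∃ K : ℝ≥0∞, K ≠ ∞ ∧ ∀ (x : X) (s : ℝ), 0 < s →
      ∫⁻ y, ENNReal.ofReal (exp (-a * dist x y ^ 2 / s ^ 2)) ∂μ ≤ K * μ (ball x s) := by
  have hsum : Summable fun k : ℕ => Cd * (((k : ℝ) + 1) ^ n * exp (-a * k)) :=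
    (summable_rpow_mul_exp_neg_mul n ha).mul_left Cd
  refine ⟨_, ENNReal.tsum_coe_ne_top_iff_summable.2 hsum.toNNReal, fun x s hs => ?_⟩
  calc ∫⁻ y, ENNReal.ofReal (exp (-a * dist x y ^ 2 / s ^ 2)) ∂μ
      ≤ ∫⁻ y, ∑' k : ℕ,
          (ball x ((k + 1) * s)).indicator (fun _ => ENNReal.ofReal (exp (-a * k))) y ∂μ :=
        lintegral_mono fun y => ofReal_exp_neg_dist_sq_le_tsum_indicator ha.le hs x y
    _ = ∑' k : ℕ, ENNReal.ofReal (exp (-a * k)) * μ (ball x ((k + 1) * s)) := by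
        rw [lintegral_tsum fun k => (measurable_const.indicator measurableSet_ball).aemeasurable]
        simp only [lintegral_indicator measurableSet_ball, setLIntegral_const]
    _ ≤ ∑' k : ℕ, ENNReal.ofReal (exp (-a * k)) *
          (ENNReal.ofReal (Cd * ((k : ℝ) + 1) ^ n) * μ (ball x s)) := by
        gcongr with k
        exact hdoub x s _ hs (by linarith [k.cast_nonneg (α := ℝ)])
    _ = (∑' k : ℕ, ENNReal.ofReal (Cd * (((k : ℝ) + 1) ^ n * exp (-a * k)))) * μ (ball x s) := by
        rw [← ENNReal.tsum_mul_right]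
        congr 1 with k
        rw [← mul_assoc Cd, ENNReal.ofReal_mul' (exp_pos _).le]
        ring

end Gaussian

lemma ENNReal.lintegral_mul_sq_le {α : Type*} [MeasurableSpace α] {μ : Measure α}
    {f g : α → ℝ≥0∞} (hf : AEMeasurable f μ) (hg : AEMeasurable g μ) :
    (∫⁻ a, f a * g a ∂μ) ^ 2 ≤ (∫⁻ a, f a ^ 2 ∂μ) * ∫⁻ a, g a ^ 2 ∂μ := by
  have h := ENNReal.lintegral_mul_le_Lp_mul_Lq μ Real.HolderConjugate.two_two hf hg
  simp only [Pi.mul_apply, ENNReal.rpow_two] at h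
  calc (∫⁻ a, f a * g a ∂μ) ^ 2
      ≤ ((∫⁻ a, f a ^ 2 ∂μ) ^ (1 / 2 : ℝ) * (∫⁻ a, g a ^ 2 ∂μ) ^ (1 / 2 : ℝ)) ^ 2 := by gcongr
    _ = (∫⁻ a, f a ^ 2 ∂μ) * ∫⁻ a, g a ^ 2 ∂μ := by
        rw [mul_pow, ← ENNReal.rpow_natCast, ← ENNReal.rpow_natCast, ← ENNReal.rpow_mul,
          ← ENNReal.rpow_mul]
        norm_num

section HeatKernel

variable {X : Type*} [PseudoMetricSpace X] [MeasurableSpace X] {μ : Measure X}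

lemma enorm_sq_mul_measure_ball_le_of_abs_le_gaussian [OpensMeasurableSpace X] {g k : X → ℝ}
    (hg : AEMeasurable g μ) {x : X} {s C c : ℝ} {K : ℝ≥0∞} (hV₀ : μ (ball x s) ≠ 0) (hV : μ (ball x s) ≠ ∞) (hC : 0 ≤ C)
    (hk : ∀ y, |k y| ≤ C / (μ (ball x s)).toReal * exp (-dist x y ^ 2 / (c * s ^ 2)))
    (hK : ∫⁻ y, ENNReal.ofReal (exp (-(2 / c) * dist x y ^ 2 / s ^ 2)) ∂μ ≤ K * μ (ball x s))
    (hx : ∫ y, k y * g y ∂μ = g x) :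
    ‖g x‖ₑ ^ 2 * μ (ball x s) ≤ ENNReal.ofReal (C ^ 2) * K * ∫⁻ y, ‖g y‖ₑ ^ 2 ∂μ := by
  set V := μ (ball x s)
  set G : X → ℝ≥0∞ := fun y => ENNReal.ofReal (exp (-dist x y ^ 2 / (c * s ^ 2)))
  have hG : Measurable G := by unfold G; fun_prop
  have hk' : ∀ y, ‖k y‖ₑ ≤ ENNReal.ofReal C / V * G y := fun y => by
    rw [Real.enorm_eq_ofReal_abs, ← ENNReal.ofReal_toReal hV, ← ENNReal.ofReal_div_of_pos
      (ENNReal.toReal_pos hV₀ hV), ← ENNReal.ofReal_mul (by positivity)]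
    exact ENNReal.ofReal_le_ofReal (hk y)
  have hG_sq : ∫⁻ y, G y ^ 2 ∂μ ≤ K * V := by
    refine (lintegral_congr fun y => ?_).trans_le hK
    rw [← ENNReal.ofReal_pow (exp_pos _).le, ← exp_nat_mul]
    congr 2
    ring
  have hgx : ‖g x‖ₑ ≤ ∫⁻ y, (ENNReal.ofReal C / V * G y) * ‖g y‖ₑ ∂μ :=
    calc ‖g x‖ₑ = ‖∫ y, k y * g y ∂μ‖ₑ := by rw [hx]
      _ ≤ ∫⁻ y, ‖k y * g y‖ₑ ∂μ := enorm_integral_le_lintegral_enorm _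
      _ ≤ _ := lintegral_mono fun y => by rw [enorm_mul]; gcongr; exact hk' y
  calc ‖g x‖ₑ ^ 2 * V
      ≤ (∫⁻ y, (ENNReal.ofReal C / V * G y) ^ 2 ∂μ) * (∫⁻ y, ‖g y‖ₑ ^ 2 ∂μ) * V := by
        gcongr
        exact (pow_le_pow_left₀ zero_le hgx 2).trans
          (ENNReal.lintegral_mul_sq_le (hG.const_mul _).aemeasurable hg.enorm)
    _ = (ENNReal.ofReal C / V) ^ 2 * (∫⁻ y, G y ^ 2 ∂μ) * V * ∫⁻ y, ‖g y‖ₑ ^ 2 ∂μ := by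
        simp_rw [mul_pow]
        rw [lintegral_const_mul _ (hG.pow_const 2)]
        ring
    _ ≤ (ENNReal.ofReal C / V) ^ 2 * (K * V) * V * ∫⁻ y, ‖g y‖ₑ ^ 2 ∂μ := by gcongr
    _ = (ENNReal.ofReal C / V * V) ^ 2 * K * ∫⁻ y, ‖g y‖ₑ ^ 2 ∂μ := by ring
    _ = ENNReal.ofReal (C ^ 2) * K * ∫⁻ y, ‖g y‖ₑ ^ 2 ∂μ := by
        rw [ENNReal.div_mul_cancel hV₀ hV, ENNReal.ofReal_pow hC]

lemma eq_zero_of_forall_mul_measure_ball_le (hinf : μ Set.univ = ∞) {c M : ℝ≥0∞} (hM : M ≠ ∞)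
    {x : X} (h : ∀ k : ℕ, c * μ (ball x (k + 1)) ≤ M) : c = 0 := by
  by_contra hc
  have hmono : Monotone fun k : ℕ => ball x ((k : ℝ) + 1) := fun i j hij =>
    ball_subset_ball (by gcongr)
  have huniv : μ Set.univ ≤ M / c := by
    rw [← iUnion_ball_nat_succ x, hmono.measure_iUnion]
    exact iSup_le fun k => (ENNReal.le_div_iff_mul_le (.inl hc) (.inr hM)).2 (mul_comm c _ ▸ h k)
  exact (ENNReal.div_lt_top hM hc).ne (top_le_iff.1 (hinf ▸ huniv))

end HeatKernel

theorem stmt_10_general {X : Type*} [MetricSpace X] [MeasurableSpace X] [OpensMeasurableSpace X]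
    (μ : Measure X)
    (Cd n : ℝ)
    (hdoub : ∀ (x : X) (r lam : ℝ), 0 < r → 1 ≤ lam →
      μ (ball x (lam * r)) ≤ ENNReal.ofReal (Cd * lam ^ n) * μ (ball x r))
    (hV : ∀ (x : X) (r : ℝ), 0 < r → 0 < μ (ball x r) ∧ μ (ball x r) < ∞)
    (hinf : μ Set.univ = ∞)
    -- heat kernels with Gaussian upper bounds
    (p : ℝ → X → X → ℝ) (Cg cg : ℝ) (hCg : 0 < Cg) (hcg : 0 < cg)
    (hgauss : ∀ t : ℝ, 0 < t → ∀ x y : X,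
      |p t x y| ≤ Cg / (μ (ball x (Real.sqrt t))).toReal
        * Real.exp (-(dist x y) ^ 2 / (cg * t)))
    -- P = E({0}): an idempotent preserving L² whose range is fixed by e^{-tL}
    (P : (X → ℝ) → (X → ℝ))
    (hmem : ∀ f, MemLp f 2 μ → MemLp (P f) 2 μ)
    (hfix : ∀ f, MemLp f 2 μ → ∀ t : ℝ, 0 < t →
      ∀ᵐ x ∂μ, ∫ y, p t x y * P f y ∂μ = P f x) :
    ∀ f, MemLp f 2 μ → P f =ᵐ[μ] 0 := by
  intro f hf
  obtain ⟨K, hK_ne_top, hK⟩ :=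
    exists_lintegral_exp_neg_dist_sq_le hdoub (a := 2 / cg) (by positivity)
  have hg : MemLp (P f) 2 μ := hmem f hf
  have hg_sq : ∫⁻ y, ‖P f y‖ₑ ^ 2 ∂μ ≠ ∞ := by
    simpa using (lintegral_rpow_enorm_lt_top_of_eLpNorm_lt_top two_ne_zero
      ENNReal.ofNat_ne_top hg.eLpNorm_lt_top).ne
  set M := ENNReal.ofReal (Cg ^ 2) * K * ∫⁻ y, ‖P f y‖ₑ ^ 2 ∂μ
  have hM : M ≠ ∞ := ENNReal.mul_ne_top (ENNReal.mul_ne_top ENNReal.ofReal_ne_top hK_ne_top) hg_sq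
  have hbound : ∀ᵐ x ∂μ, ∀ k : ℕ, ‖P f x‖ₑ ^ 2 * μ (ball x (k + 1)) ≤ M := by
    refine ae_all_iff.2 fun k => ?_
    have hs : (0 : ℝ) < k + 1 := by positivity
    filter_upwards [hfix f hf ((k + 1) ^ 2) (by positivity)] with x hx
    obtain ⟨hV₀, hV_lt_top⟩ := hV x _ hs
    refine enorm_sq_mul_measure_ball_le_of_abs_le_gaussian hg.1.aemeasurable hV₀.ne'
      hV_lt_top.ne hCg.le (fun y => ?_) (hK x _ hs) hx
    have hgauss_k := hgauss ((k + 1) ^ 2) (by positivity) x y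
    rwa [Real.sqrt_sq hs.le] at hgauss_k
  filter_upwards [hbound] with x hx
  simpa using eq_zero_of_forall_mul_measure_ball_le hinf hM hx

/-- On a space of homogeneous type with `μ(X) = ∞` and a
non-negative self-adjoint operator whose heat kernel obeys a Gaussian upper
bound, the spectral projection `E({0})` vanishes. Here `P` plays the role of
`E({0})`: it is an idempotent on `L²` whose range consists of functions fixed
by the heat semigroup, and the conclusion is `P = 0` on `L²`. -/
theorem stmt_10 {X : Type*} [MetricSpace X] [MeasurableSpace X] [OpensMeasurableSpace X]
    (μ : Measure X)
    (Cd n : ℝ)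
    (hdoub : ∀ (x : X) (r lam : ℝ), 0 < r → 1 ≤ lam →
      μ (ball x (lam * r)) ≤ ENNReal.ofReal (Cd * lam ^ n) * μ (ball x r))
    (hV : ∀ (x : X) (r : ℝ), 0 < r → 0 < μ (ball x r) ∧ μ (ball x r) < ∞)
    (hinf : μ Set.univ = ∞)
    -- heat kernels with Gaussian upper bounds
    (p : ℝ → X → X → ℝ) (Cg cg : ℝ) (hCg : 0 < Cg) (hcg : 0 < cg)
    (hgauss : ∀ t : ℝ, 0 < t → ∀ x y : X,
      |p t x y| ≤ Cg / (μ (ball x (Real.sqrt t))).toReal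
        * Real.exp (-(dist x y) ^ 2 / (cg * t)))
    -- P = E({0}): an idempotent preserving L² whose range is fixed by e^{-tL}
    (P : (X → ℝ) → (X → ℝ))
    (hmem : ∀ f, MemLp f 2 μ → MemLp (P f) 2 μ)
    (hidem : ∀ f, MemLp f 2 μ → P (P f) =ᵐ[μ] P f)
    (hfix : ∀ f, MemLp f 2 μ → ∀ t : ℝ, 0 < t →
      ∀ᵐ x ∂μ, ∫ y, p t x y * P f y ∂μ = P f x) :
    ∀ f, MemLp f 2 μ → P f =ᵐ[μ] 0 :=
  stmt_10_general μ Cd n hdoub hV hinf p Cg cg hCg hcg hgauss P hmem hfix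
end

section
/- Let (X, ρ, μ) be a space of homogeneous type with μ(X) = ∞ and let L be a non-negative self-adjoint operator on L²(X) with Gaussian heat kernel bounds. If f ∈ L²(X) satisfies e^{-tL}f = f for all t > 0, then f = 0. -/
/-!
Cauchy–Schwarz against the Gaussian majorant of the kernel gives
`|e^{-tL} f (x)| ≤ C ‖f‖₂ V(x, √t)^{-1/2}`: the `L²` norm of the Gaussian is at most a constant
times `V(x, √t)^{1/2}`, by splitting `X` into `B(x, √t)` and the dyadic annuli around it and using
doubling on each annulus. A fixed point `f` therefore satisfies this bound for every `t`, and since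
`μ(X) = ∞` forces `V(x, √t) → ∞`, it vanishes almost everywhere.
-/

open MeasureTheory Metric Filter Set Topology
open scoped ENNReal

def IsDoublingAt {X : Type*} [PseudoMetricSpace X] [MeasurableSpace X] (μ : Measure X) (x : X)
    (Cd n : ℝ) : Prop :=
  ∀ r lam : ℝ, 0 < r → 1 ≤ lam → μ (ball x (lam * r)) ≤ ENNReal.ofReal (Cd * lam ^ n) * μ (ball x r)

lemma summable_rpow_two_pow_mul_exp_neg_four_pow (n : ℝ) {c : ℝ} (hc : 0 < c) :
    Summable fun j : ℕ => ((2 : ℝ) ^ (j + 1)) ^ n * Real.exp (-4 ^ j / c) := by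
  set a : ℕ → ℝ := fun j => ((2 : ℝ) ^ (j + 1)) ^ n * Real.exp (-4 ^ j / c)
  have ha : ∀ j, 0 < a j := fun j => by positivity
  have hratio : ∀ j, a (j + 1) = 2 ^ n * Real.exp (-(3 / c) * 4 ^ j) * a j := fun j => by
    simp only [a, pow_succ _ (j + 1), mul_comm _ (2 : ℝ),
      Real.mul_rpow zero_le_two (pow_nonneg zero_le_two _)]
    rw [show -(4 : ℝ) ^ (j + 1) / c = -(3 / c) * 4 ^ j + -4 ^ j / c by ring, Real.exp_add]
    ring
  have hlim : Tendsto (fun j => 2 ^ n * Real.exp (-(3 / c) * 4 ^ j)) atTop (𝓝 0) := by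
    simpa using ((Real.tendsto_exp_atBot.comp <|
      (tendsto_pow_atTop_atTop_of_one_lt (by norm_num : (1 : ℝ) < 4)).const_mul_atTop_of_neg
        (neg_neg_of_pos (div_pos three_pos hc))).const_mul (2 ^ n))
  refine summable_of_ratio_test_tendsto_lt_one zero_lt_one
    (Eventually.of_forall fun j => (ha j).ne') (hlim.congr fun j => ?_)
  rw [Real.norm_of_nonneg (ha _).le, Real.norm_of_nonneg (ha _).le, hratio,
    mul_div_cancel_right₀ _ (ha j).ne']

/-- The ball `B(x, √t)` contributes `1`, the `j`-th dyadic annulus around it at most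
`Cd (2^{j+1})^n e^{-4^j/c}`: doubling bounds its measure, the Gaussian `e^{-ρ²/(ct)}` its integrand. -/
noncomputable def doublingGaussianConst (Cd n c : ℝ) : ℝ≥0∞ :=
  1 + ENNReal.ofReal Cd * ∑' j : ℕ, ENNReal.ofReal (((2 : ℝ) ^ (j + 1)) ^ n * Real.exp (-4 ^ j / c))

lemma doublingGaussianConst_ne_top (Cd n : ℝ) {c : ℝ} (hc : 0 < c) :
    doublingGaussianConst Cd n c ≠ ∞ := by
  rw [doublingGaussianConst, ← ENNReal.ofReal_tsum_of_nonneg (fun j => by positivity)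
    (summable_rpow_two_pow_mul_exp_neg_four_pow n hc)]
  finiteness

lemma univ_subset_ball_union_annuli {X : Type*} [PseudoMetricSpace X] (x : X) {s : ℝ}
    (hs : 0 < s) : univ ⊆ ball x s ∪ ⋃ j : ℕ, ball x (2 ^ (j + 1) * s) \ ball x (2 ^ j * s) := by
  intro y _
  rcases lt_or_ge (dist y x) s with h | h
  · exact Or.inl h
  obtain ⟨j, hj, hj'⟩ := exists_nat_pow_near ((one_le_div hs).2 h) one_lt_two
  exact Or.inr (mem_iUnion.2 ⟨j, mem_ball.2 ((div_lt_iff₀ hs).1 hj'),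
    fun hy => (mem_ball.1 hy).not_ge ((le_div_iff₀ hs).1 hj)⟩)

lemma exp_neg_dist_sq_le_of_le_dist {X : Type*} [PseudoMetricSpace X] {x y : X} {c s : ℝ}
    (hc : 0 < c) (hs : 0 < s) (j : ℕ) (hy : 2 ^ j * s ≤ dist x y) :
    Real.exp (-dist x y ^ 2 / (c * s ^ 2)) ≤ Real.exp (-4 ^ j / c) := by
  have h4 : (4 : ℝ) ^ j * s ^ 2 ≤ dist x y ^ 2 := by
    calc (4 : ℝ) ^ j * s ^ 2 = (2 ^ j * s) ^ 2 := by
          rw [mul_pow, ← pow_mul, mul_comm j, pow_mul]; norm_num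
      _ ≤ dist x y ^ 2 := by gcongr
  rw [Real.exp_le_exp, div_le_div_iff₀ (by positivity) hc]
  nlinarith

lemma enorm_integral_mul_le_eLpNorm_mul_eLpNorm {X : Type*} [MeasurableSpace X] {μ : Measure X}
    {k g f : X → ℝ} (hg : AEStronglyMeasurable g μ) (hf : AEStronglyMeasurable f μ)
    (hkg : ∀ y, |k y| ≤ g y) :
    ‖∫ y, k y * f y ∂μ‖ₑ ≤ eLpNorm g 2 μ * eLpNorm f 2 μ :=
  calc ‖∫ y, k y * f y ∂μ‖ₑ ≤ ∫⁻ y, ‖k y * f y‖ₑ ∂μ := enorm_integral_le_lintegral_enorm _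
    _ ≤ ∫⁻ y, ‖(g • f) y‖ₑ ∂μ := lintegral_mono fun y => by
        simp only [Pi.smul_apply', smul_eq_mul, enorm_mul]
        gcongr
        exact enorm_le_iff_norm_le.2 ((hkg y).trans (le_abs_self _))
    _ = eLpNorm (g • f) 1 μ := eLpNorm_one_eq_lintegral_enorm.symm
    _ ≤ eLpNorm g 2 μ * eLpNorm f 2 μ := eLpNorm_smul_le_mul_eLpNorm hf hg

lemma tendsto_measure_ball_atTop {X : Type*} [PseudoMetricSpace X] [MeasurableSpace X]
    {μ : Measure X} (hμ : μ univ = ∞) (x : X) :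
    Tendsto (fun r : ℝ => μ (ball x r)) atTop (𝓝 ∞) := by
  have hunion : ⋃ r : ℝ, ball x r = univ :=
    eq_univ_of_forall fun y => mem_iUnion.2 ⟨dist y x + 1, mem_ball.2 (lt_add_one _)⟩
  have := tendsto_measure_iUnion_atTop (μ := μ) fun r r' (h : r ≤ r') => ball_subset_ball (x := x) h
  rwa [hunion, hμ] at this

section Doubling

variable {X : Type*} [PseudoMetricSpace X] [MeasurableSpace X] {μ : Measure X} {x : X}
  {Cd n c t : ℝ}

lemma lintegral_exp_neg_dist_sq_le (hdoub : IsDoublingAt μ x Cd n) (hc : 0 < c) (ht : 0 < t) :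
    ∫⁻ y, ENNReal.ofReal (Real.exp (-dist x y ^ 2 / (c * t))) ∂μ ≤
      doublingGaussianConst Cd n c * μ (ball x √t) := by
  set s := √t
  have hs : 0 < s := Real.sqrt_pos.2 ht
  rw [← Real.sq_sqrt ht.le]
  set g : X → ℝ≥0∞ := fun y => ENNReal.ofReal (Real.exp (-dist x y ^ 2 / (c * s ^ 2)))
  set A : ℕ → Set X := fun j => ball x (2 ^ (j + 1) * s) \ ball x (2 ^ j * s)
  have hball : ∫⁻ y in ball x s, g y ∂μ ≤ μ (ball x s) := by
    refine (setLIntegral_mono measurable_const fun y _ => ?_).trans (setLIntegral_one _).le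
    have : 0 < c * s ^ 2 := by positivity
    exact ENNReal.ofReal_le_one.2 (Real.exp_le_one_iff.2
      (div_nonpos_of_nonpos_of_nonneg (neg_nonpos.2 (sq_nonneg _)) this.le))
  have hannulus : ∀ j, ∫⁻ y in A j, g y ∂μ ≤ ENNReal.ofReal Cd *
      ENNReal.ofReal (((2 : ℝ) ^ (j + 1)) ^ n * Real.exp (-4 ^ j / c)) * μ (ball x s) := by
    intro j
    have hg : ∀ y ∈ A j, g y ≤ ENNReal.ofReal (Real.exp (-4 ^ j / c)) := fun y hy =>
      ENNReal.ofReal_le_ofReal (exp_neg_dist_sq_le_of_le_dist hc hs j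
        (by simpa [dist_comm] using hy.2))
    calc ∫⁻ y in A j, g y ∂μ ≤ ENNReal.ofReal (Real.exp (-4 ^ j / c)) * μ (A j) :=
          (setLIntegral_mono measurable_const hg).trans (setLIntegral_const _ _).le
      _ ≤ ENNReal.ofReal (Real.exp (-4 ^ j / c)) *
          (ENNReal.ofReal (Cd * ((2 : ℝ) ^ (j + 1)) ^ n) * μ (ball x s)) := by
          gcongr
          exact (measure_mono sdiff_subset).trans (hdoub s _ hs (one_le_pow₀ one_le_two))
      _ = _ := by
          rw [ENNReal.ofReal_mul' (by positivity), ENNReal.ofReal_mul (by positivity)]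
          ring
  calc ∫⁻ y, g y ∂μ ≤ ∫⁻ y in ball x s ∪ ⋃ j, A j, g y ∂μ := by
        rw [← setLIntegral_univ]
        exact lintegral_mono_set (univ_subset_ball_union_annuli x hs)
    _ ≤ ∫⁻ y in ball x s, g y ∂μ + ∑' j, ∫⁻ y in A j, g y ∂μ :=
        (lintegral_union_le _ _ _).trans (add_le_add_right (lintegral_iUnion_le _ _) _)
    _ ≤ μ (ball x s) + ∑' j, ENNReal.ofReal Cd *
        ENNReal.ofReal (((2 : ℝ) ^ (j + 1)) ^ n * Real.exp (-4 ^ j / c)) * μ (ball x s) :=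
        add_le_add hball (ENNReal.tsum_le_tsum hannulus)
    _ = doublingGaussianConst Cd n c * μ (ball x s) := by
        rw [ENNReal.tsum_mul_right, ENNReal.tsum_mul_left, doublingGaussianConst, add_mul, one_mul]

lemma eLpNorm_exp_neg_dist_sq_le (hdoub : IsDoublingAt μ x Cd n) (hc : 0 < c) (ht : 0 < t) :
    eLpNorm (fun y => Real.exp (-dist x y ^ 2 / (c * t))) 2 μ ≤
      (doublingGaussianConst Cd n (c / 2) * μ (ball x √t)) ^ (1 / 2 : ℝ) := by
  have hsq : ∀ y, ‖Real.exp (-dist x y ^ 2 / (c * t))‖ₑ ^ (2 : ℝ) =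
      ENNReal.ofReal (Real.exp (-dist x y ^ 2 / (c / 2 * t))) := fun y => by
    rw [Real.enorm_of_nonneg (Real.exp_nonneg _), ENNReal.ofReal_rpow_of_nonneg
      (Real.exp_nonneg _) zero_le_two, ← Real.exp_mul]
    congr 2
    field_simp
  rw [eLpNorm_eq_lintegral_rpow_enorm_toReal two_ne_zero ENNReal.ofNat_ne_top]
  simp only [ENNReal.toReal_ofNat, hsq, one_div]
  gcongr
  exact lintegral_exp_neg_dist_sq_le hdoub (half_pos hc) ht

lemma enorm_integral_mul_le_of_abs_le_gaussian [OpensMeasurableSpace X]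
    (hdoub : IsDoublingAt μ x Cd n) (hc : 0 < c) (ht : 0 < t) (hV0 : μ (ball x √t) ≠ 0)
    (hVtop : μ (ball x √t) ≠ ∞) {C : ℝ} {k f : X → ℝ}
    (hk : ∀ y, |k y| ≤ C / (μ (ball x √t)).toReal * Real.exp (-dist x y ^ 2 / (c * t)))
    (hf : AEStronglyMeasurable f μ) :
    ‖∫ y, k y * f y ∂μ‖ₑ ≤ ‖C‖ₑ * doublingGaussianConst Cd n (c / 2) ^ (1 / 2 : ℝ) *
      eLpNorm f 2 μ * μ (ball x √t) ^ (-1 / 2 : ℝ) := by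
  set V := μ (ball x √t)
  set gauss : X → ℝ := fun y => Real.exp (-dist x y ^ 2 / (c * t))
  have hgauss : Continuous gauss := by fun_prop
  calc ‖∫ y, k y * f y ∂μ‖ₑ ≤ eLpNorm ((C / V.toReal) • gauss) 2 μ * eLpNorm f 2 μ :=
        enorm_integral_mul_le_eLpNorm_mul_eLpNorm
          (hgauss.const_smul _).aestronglyMeasurable hf hk
    _ = ‖C‖ₑ / V * eLpNorm gauss 2 μ * eLpNorm f 2 μ := by
        rw [eLpNorm_const_smul, div_eq_mul_inv, enorm_mul,
          enorm_inv (ENNReal.toReal_ne_zero.2 ⟨hV0, hVtop⟩),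
          Real.enorm_of_nonneg ENNReal.toReal_nonneg, ENNReal.ofReal_toReal hVtop, div_eq_mul_inv]
    _ ≤ ‖C‖ₑ / V * (doublingGaussianConst Cd n (c / 2) * V) ^ (1 / 2 : ℝ) * eLpNorm f 2 μ := by
        gcongr
        exact eLpNorm_exp_neg_dist_sq_le hdoub hc ht
    _ = _ := by
        rw [ENNReal.mul_rpow_of_nonneg _ _ (by norm_num), div_eq_mul_inv, ← ENNReal.rpow_neg_one,
          mul_mul_mul_comm, ← ENNReal.rpow_add _ _ hV0 hVtop]
        norm_num
        ring

end Doubling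

theorem stmt_11_general {X : Type*} [MetricSpace X] [MeasurableSpace X] [OpensMeasurableSpace X]
    (μ : Measure X)
    -- space of homogeneous type: doubling, balls of finite positive measure
    (Cd n : ℝ)
    (hdoub : ∀ (x : X) (r lam : ℝ), 0 < r → 1 ≤ lam →
      μ (ball x (lam * r)) ≤ ENNReal.ofReal (Cd * lam ^ n) * μ (ball x r))
    (hV : ∀ (x : X) (r : ℝ), 0 < r → 0 < μ (ball x r) ∧ μ (ball x r) < ∞)
    -- infinite total measure
    (hinf : μ Set.univ = ∞)
    -- heat kernels with Gaussian upper bounds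
    (p : ℝ → X → X → ℝ) (Cg cg : ℝ) (hcg : 0 < cg)
    (hgauss : ∀ t : ℝ, 0 < t → ∀ x y : X,
      |p t x y| ≤ Cg / (μ (ball x (Real.sqrt t))).toReal
        * Real.exp (-(dist x y) ^ 2 / (cg * t)))
    -- f ∈ L² is fixed by the heat semigroup
    (f : X → ℝ) (hf : MemLp f 2 μ)
    (hfix : ∀ t : ℝ, 0 < t → ∀ᵐ x ∂μ, ∫ y, p t x y * f y ∂μ = f x) :
    f =ᵐ[μ] 0 := by
  set B := ‖Cg‖ₑ * doublingGaussianConst Cd n (cg / 2) ^ (1 / 2 : ℝ) * eLpNorm f 2 μ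
  have hB : B ≠ ∞ := ENNReal.mul_ne_top (ENNReal.mul_ne_top enorm_ne_top
    (ENNReal.rpow_ne_top_of_nonneg (by norm_num) (doublingGaussianConst_ne_top Cd n (half_pos hcg))))
    hf.eLpNorm_ne_top
  have hfix' : ∀ᵐ x ∂μ, ∀ m : ℕ, ∫ y, p (m + 1) x y * f y ∂μ = f x :=
    ae_all_iff.2 fun m => hfix (m + 1) m.cast_add_one_pos
  filter_upwards [hfix'] with x hx
  have hbound : ∀ m : ℕ, ‖f x‖ₑ ≤ B * μ (ball x √(m + 1)) ^ (-1 / 2 : ℝ) := fun m => by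
    have ht : (0 : ℝ) < m + 1 := m.cast_add_one_pos
    obtain ⟨hV0, hVtop⟩ := hV x _ (Real.sqrt_pos.2 ht)
    rw [← hx m]
    exact enorm_integral_mul_le_of_abs_le_gaussian (hdoub x) hcg ht hV0.ne' hVtop.ne
      (hgauss _ ht x) hf.aestronglyMeasurable
  have hlim : Tendsto (fun m : ℕ => B * μ (ball x √(m + 1)) ^ (-1 / 2 : ℝ)) atTop (𝓝 0) := by
    have hball := (tendsto_measure_ball_atTop hinf x).comp <| Real.tendsto_sqrt_atTop.comp <|
      tendsto_atTop_add_const_right _ (1 : ℝ) tendsto_natCast_atTop_atTop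
    have hrpow := (ENNReal.continuous_rpow_const (y := -1 / 2)).tendsto ∞ |>.comp hball
    rw [ENNReal.top_rpow_of_neg (by norm_num)] at hrpow
    simpa using ENNReal.Tendsto.const_mul hrpow (Or.inr hB)
  simpa using ge_of_tendsto' hlim hbound

/-- On a space of homogeneous type with `μ(X) = ∞`, if the heat
semigroup (given by kernels `p_t` with Gaussian upper bounds) fixes
`f ∈ L²(X)`, i.e. `e^{-tL}f = f` for all `t > 0`, then `f = 0`. -/
theorem stmt_11 {X : Type*} [MetricSpace X] [MeasurableSpace X] [OpensMeasurableSpace X]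
    (μ : Measure X)
    -- space of homogeneous type: doubling, balls of finite positive measure
    (Cd n : ℝ)
    (hdoub : ∀ (x : X) (r lam : ℝ), 0 < r → 1 ≤ lam →
      μ (ball x (lam * r)) ≤ ENNReal.ofReal (Cd * lam ^ n) * μ (ball x r))
    (hV : ∀ (x : X) (r : ℝ), 0 < r → 0 < μ (ball x r) ∧ μ (ball x r) < ∞)
    -- infinite total measure
    (hinf : μ Set.univ = ∞)
    -- heat kernels with Gaussian upper bounds
    (p : ℝ → X → X → ℝ) (Cg cg : ℝ) (hCg : 0 < Cg) (hcg : 0 < cg)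
    (hgauss : ∀ t : ℝ, 0 < t → ∀ x y : X,
      |p t x y| ≤ Cg / (μ (ball x (Real.sqrt t))).toReal
        * Real.exp (-(dist x y) ^ 2 / (cg * t)))
    -- f ∈ L² is fixed by the heat semigroup
    (f : X → ℝ) (hf : MemLp f 2 μ)
    (hfix : ∀ t : ℝ, 0 < t → ∀ᵐ x ∂μ, ∫ y, p t x y * f y ∂μ = f x) :
    f =ᵐ[μ] 0 :=
  stmt_11_general μ Cd n hdoub hV hinf p Cg cg hcg hgauss f hf hfix
end
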